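/- In a finite MDP with policy π, if for some p ∈ [0,1] every proxy state x' ∈ U' satisfies S_π(x') ≤ p, then every state x ∈ H satisfies S_π(x) ≤ p; i.e., p-safety of all proxy states implies p-safety of the entire MDP. -/

import Mathlib

/-!
Let `A n` be the event that the chain enters `U` within `n` steps without visiting `E` first;
these events increase to `{τ_U < τ_E}`. We show `P_x(A n) ≤ p` for `x ∈ H` by induction on `n`.
For `x ∈ U'` this is the hypothesis. For `x ∈ H \ U'`, the chain cannot jump straight into `U`
(that would give `τ_U < τ_{U'}` with positive probability), and from `E` the event is null, so
the one-step Markov property `P_x(A (n+1)) ≤ ∑ y, p(x,y) P_y(A n)` closes the induction.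
The Markov property comes from comparing the law of the shifted path with `∑ y, p(x,y) P_y`
on cylinders. Measurability of every subset of the state space is forced by the initial laws
being point masses.
-/

open MeasureTheory Set Filter
open scoped ENNReal

noncomputable section

/-- First hitting time of a set `A` along the path `ω`, valued in `ℕ∞`
(`⊤` if the path never visits `A`). -/
def hit {X : Type*} (A : Set X) (ω : ℕ → X) : ℕ∞ :=
  sInf ((fun n : ℕ => (n : ℕ∞)) '' {n | ω n ∈ A})

/-- `P` is the family of path measures of a time-homogeneous Markov chain with
one-step transition kernel `p`, where `P x` is the law of the chain started at `x`. -/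
def IsMarkovChain {X : Type*} [MeasurableSpace X] [DecidableEq X]
    (P : X → Measure (ℕ → X)) (p : X → X → ℝ≥0∞) : Prop :=
  (∀ x, IsProbabilityMeasure (P x)) ∧
  (∀ x y, P x {ω | ω 0 = y} = if y = x then 1 else 0) ∧
  (∀ x (n : ℕ) (s : ℕ → X),
    P x {ω | ∀ i ≤ n + 1, ω i = s i}
      = P x {ω | ∀ i ≤ n, ω i = s i} * p (s n) (s (n + 1)))

section Paths

variable {X : Type*}

lemma coe_lt_hit_iff {A : Set X} {ω : ℕ → X} {k : ℕ} :
    (k : ℕ∞) < hit A ω ↔ ∀ j ≤ k, ω j ∉ A := by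
  rw [← ENat.add_one_le_iff (ENat.natCast_ne_top k), hit, le_sInf_iff]
  simp only [forall_mem_image, mem_ofPred_eq]
  refine ⟨fun h j hj hA => ?_, fun h j hA => ?_⟩
  · have := h hA
    norm_cast at this
    omega
  · norm_cast
    by_contra! hj
    exact h j (by omega) hA

lemma hit_lt_hit_iff {A B : Set X} {ω : ℕ → X} :
    hit A ω < hit B ω ↔ ∃ k, ω k ∈ A ∧ ∀ j ≤ k, ω j ∉ B := by
  conv_lhs => rw [hit, sInf_lt_iff]
  simp [coe_lt_hit_iff]

def reachBefore (U E : Set X) (n : ℕ) : Set (ℕ → X) :=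
  {ω | ∃ k ≤ n, ω k ∈ U ∧ ∀ j ≤ k, ω j ∉ E}

lemma monotone_reachBefore (U E : Set X) : Monotone (reachBefore U E) :=
  fun _ _ hmn _ ⟨k, hk, hU, hE⟩ => ⟨k, hk.trans hmn, hU, hE⟩

lemma setOf_hit_lt_hit_eq_iUnion (U E : Set X) :
    {ω | hit U ω < hit E ω} = ⋃ n, reachBefore U E n := by
  ext ω
  simp only [mem_ofPred_eq, hit_lt_hit_iff, mem_iUnion, reachBefore]
  exact ⟨fun ⟨k, hk⟩ => ⟨k, k, le_rfl, hk⟩, fun ⟨_, k, _, hk⟩ => ⟨k, hk⟩⟩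

def shiftPath (ω : ℕ → X) : ℕ → X := fun n => ω (n + 1)

lemma shiftPath_mem_reachBefore {U E : Set X} {ω : ℕ → X} {n : ℕ} (h0 : ω 0 ∉ U)
    (h : ω ∈ reachBefore U E (n + 1)) : shiftPath ω ∈ reachBefore U E n := by
  obtain ⟨_ | k, hk, hU, hE⟩ := h
  · exact absurd hU h0
  · exact ⟨k, by omega, hU, fun j hj => hE (j + 1) (by omega)⟩

def pathCylinder (n : ℕ) (t : ℕ → X) : Set (ℕ → X) := {ω | ∀ i ≤ n, ω i = t i}

def consPath (x : X) (t : ℕ → X) : ℕ → X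
  | 0 => x
  | n + 1 => t n

lemma preimage_frestrictLe_singleton (n : ℕ) (t : ℕ → X) :
    Preorder.frestrictLe (π := fun _ => X) n ⁻¹' {Preorder.frestrictLe n t} =
      pathCylinder n t := by
  ext ω
  simp [pathCylinder, funext_iff]

lemma preimage_shiftPath_pathCylinder_inter (n : ℕ) (x : X) (t : ℕ → X) :
    shiftPath ⁻¹' pathCylinder n t ∩ {ω | ω 0 = x} = pathCylinder (n + 1) (consPath x t) := by
  ext ω
  simp only [pathCylinder, mem_inter_iff, mem_preimage, mem_ofPred_eq, shiftPath]
  refine ⟨fun ⟨h, h0⟩ i hi => ?_, fun h => ⟨fun i hi => h (i + 1) (by omega), h 0 (by omega)⟩⟩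
  rcases i with _ | i
  · exact h0
  · exact h i (by omega)

variable [MeasurableSpace X]

lemma measurableSet_reachBefore {U E : Set X} (hU : MeasurableSet U) (hE : MeasurableSet E)
    (n : ℕ) : MeasurableSet (reachBefore U E n) := by
  unfold reachBefore
  measurability

lemma measurableSet_hit_lt_hit {U E : Set X} (hU : MeasurableSet U) (hE : MeasurableSet E) :
    MeasurableSet {ω | hit U ω < hit E ω} := by
  rw [setOf_hit_lt_hit_eq_iUnion]
  exact .iUnion (measurableSet_reachBefore hU hE)

lemma measurable_shiftPath : Measurable (shiftPath : (ℕ → X) → ℕ → X) :=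
  measurable_pi_lambda _ fun n => measurable_pi_apply (n + 1)

variable [MeasurableSingletonClass X]

lemma measurableSet_pathCylinder (n : ℕ) (t : ℕ → X) : MeasurableSet (pathCylinder n t) := by
  unfold pathCylinder
  measurability

/- A measure on paths is determined by its marginals on the initial segments `Iic n`;
over a countable state space these are determined by their values on points, whose
preimages are path cylinders or empty. -/
lemma MeasureTheory.Measure.ext_of_pathCylinder [Countable X] {μ ν : Measure (ℕ → X)}
    [IsFiniteMeasure μ]
    (h : ∀ n t, μ (pathCylinder n t) = ν (pathCylinder n t)) : μ = ν := by
  have hfam := ProbabilityTheory.isProjectiveMeasureFamily_map_restrict (P := μ)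
    (X := fun i ω => ω i) fun i => (measurable_pi_apply i).aemeasurable
  have hμ : IsProjectiveLimit μ fun I => μ.map fun ω => I.restrict ω := fun _ => rfl
  refine hμ.unique ((isProjectiveLimit_nat_iff hfam ν).2 fun n => ?_)
  change ν.map (Preorder.frestrictLe n) = μ.map (Preorder.frestrictLe n)
  refine (Measure.ext_iff_singleton.2 fun s => ?_).symm
  rw [Measure.map_apply (Preorder.measurable_frestrictLe n) (measurableSet_singleton s),
    Measure.map_apply (Preorder.measurable_frestrictLe n) (measurableSet_singleton s)]
  by_cases hs : s ∈ range (Preorder.frestrictLe (π := fun _ => X) n)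
  · obtain ⟨t, rfl⟩ := hs
    simp only [preimage_frestrictLe_singleton, h]
  · simp [preimage_singleton_eq_empty.2 hs]

end Paths

namespace IsMarkovChain

variable {X : Type*} [MeasurableSpace X] [DecidableEq X] {P : X → Measure (ℕ → X)}
  {p : X → X → ℝ≥0∞}

/- If `y` lay in every measurable set containing `x`, a measurable null set containing
`{ω | ω 0 = y}` would, by changing `ω 0` from `y` to `x`, also contain `{ω | ω 0 = x}`. -/
lemma separatesPoints (hmc : IsMarkovChain P p) : MeasurableSpace.SeparatesPoints X := by
  refine ⟨fun y x hyx => by_contra fun hne => ?_⟩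
  obtain ⟨B, hsub, hB, hB0⟩ := exists_measurable_superset_of_null (μ := P x)
    (s := {ω | ω 0 = y}) (by rw [hmc.2.1, if_neg hne])
  have hstart : {ω : ℕ → X | ω 0 = x} ⊆ B := fun ω hω => by
    have := hyx _ (measurable_update ω (a := 0) hB) (hsub (by simp))
    rwa [mem_preimage, ← hω, Function.update_eq_self] at this
  have := measure_mono (μ := P x) hstart
  rw [hmc.2.1, if_pos rfl, hB0] at this
  exact one_ne_zero (nonpos_iff_eq_zero.1 this)

lemma measure_pathCylinder_zero (hmc : IsMarkovChain P p) (x : X) (t : ℕ → X) :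
    P x (pathCylinder 0 t) = if t 0 = x then 1 else 0 := by
  rw [← hmc.2.1]
  congr 1
  ext ω
  simp [pathCylinder]

lemma measure_pathCylinder_succ (hmc : IsMarkovChain P p) (x : X) (n : ℕ) (t : ℕ → X) :
    P x (pathCylinder (n + 1) t) = P x (pathCylinder n t) * p (t n) (t (n + 1)) :=
  hmc.2.2 x n t

lemma measure_pathCylinder_consPath [Fintype X] (hmc : IsMarkovChain P p) (x : X) (n : ℕ)
    (t : ℕ → X) :
    P x (pathCylinder (n + 1) (consPath x t)) = ∑ y, p x y * P y (pathCylinder n t) := by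
  induction n with
  | zero => simp [hmc.measure_pathCylinder_succ, hmc.measure_pathCylinder_zero, consPath]
  | succ n ih =>
    rw [hmc.measure_pathCylinder_succ, ih, Finset.sum_mul]
    simp only [hmc.measure_pathCylinder_succ, mul_assoc]
    rfl

variable [MeasurableSingletonClass X]

lemma ae_start (hmc : IsMarkovChain P p) (x : X) : ∀ᵐ ω ∂P x, ω 0 = x := by
  have := hmc.1 x
  refine (ae_iff_measure_eq ?_).2 ?_
  · exact ((measurableSet_singleton x).preimage (measurable_pi_apply 0)).nullMeasurableSet
  · rw [hmc.2.1, if_pos rfl, measure_univ]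

lemma measure_reachBefore_eq_zero_of_mem (hmc : IsMarkovChain P p) {U E : Set X} {y : X}
    (hy : y ∈ E) (n : ℕ) : P y (reachBefore U E n) = 0 := by
  rw [measure_eq_zero_iff_ae_notMem]
  filter_upwards [hmc.ae_start y] with ω h0 ⟨k, _, _, hE⟩
  exact hE 0 k.zero_le (h0 ▸ hy)

variable [Fintype X]

theorem map_shiftPath (hmc : IsMarkovChain P p) (x : X) :
    (P x).map shiftPath = ∑ y, p x y • P y := by
  have := hmc.1 x
  have hstart : P x {ω | ω 0 = x}ᶜ = 0 := hmc.ae_start x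
  refine Measure.ext_of_pathCylinder fun n t => ?_
  rw [Measure.map_apply measurable_shiftPath (measurableSet_pathCylinder n t),
    ← measure_inter_conull hstart, preimage_shiftPath_pathCylinder_inter,
    hmc.measure_pathCylinder_consPath]
  simp

lemma measure_preimage_shiftPath (hmc : IsMarkovChain P p) (x : X) {S : Set (ℕ → X)}
    (hS : MeasurableSet S) : P x (shiftPath ⁻¹' S) = ∑ y, p x y * P y S := by
  rw [← Measure.map_apply measurable_shiftPath hS, hmc.map_shiftPath]
  simp

lemma sum_kernel_eq_one (hmc : IsMarkovChain P p) (x : X) : ∑ y, p x y = 1 := by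
  simpa [(hmc.1 _).measure_univ] using (hmc.measure_preimage_shiftPath x MeasurableSet.univ).symm

lemma measure_step_eq_kernel (hmc : IsMarkovChain P p) (x y : X) :
    P x {ω | ω 1 = y} = p x y := by
  have := hmc.measure_preimage_shiftPath x
    (measurableSet_eq_fun (measurable_pi_apply 0) (measurable_const (a := y)))
  simpa [hmc.2.1, shiftPath] using this

lemma kernel_eq_zero_of_hit_lt_hit (hmc : IsMarkovChain P p) {A B : Set X} {x y : X}
    (hx : x ∉ A) (hy : y ∈ B) (h : P x {ω | hit A ω < hit B ω} = 1) : p x y = 0 := by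
  have := hmc.1 x
  have hAB : ∀ᵐ ω ∂P x, hit A ω < hit B ω := by
    refine (ae_iff_measure_eq ?_).2 (by rw [h, measure_univ])
    exact (measurableSet_hit_lt_hit .of_discrete .of_discrete).nullMeasurableSet
  rw [← hmc.measure_step_eq_kernel, measure_eq_zero_iff_ae_notMem]
  filter_upwards [hmc.ae_start x, hAB] with ω h0 hlt h1
  obtain ⟨_ | k, hkA, hkB⟩ := hit_lt_hit_iff.1 hlt
  · exact hx (h0 ▸ hkA)
  · exact hkB 1 (by omega) (h1 ▸ hy)

lemma measure_reachBefore_le (hmc : IsMarkovChain P p) {H U E U' : Set X}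
    (hpart : (univ : Set X) = H ∪ U ∪ E) (hHU : Disjoint H U)
    (hjump : ∀ x ∈ H, x ∉ U' → ∀ y ∈ U, p x y = 0) {q : ℝ≥0∞}
    (hsafe : ∀ x ∈ U', P x {ω | hit U ω < hit E ω} ≤ q) (n : ℕ) :
    ∀ x ∈ H, P x (reachBefore U E n) ≤ q := by
  induction n with
  | zero =>
    intro x hx
    suffices P x (reachBefore U E 0) = 0 by simp [this]
    rw [measure_eq_zero_iff_ae_notMem]
    filter_upwards [hmc.ae_start x] with ω h0 ⟨k, hk, hkU, _⟩
    obtain rfl : k = 0 := by omega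
    exact hHU.notMem_of_mem_left hx (h0 ▸ hkU)
  | succ n ih =>
    intro x hx
    by_cases hx' : x ∈ U'
    · refine le_trans (measure_mono ?_) (hsafe x hx')
      rw [setOf_hit_lt_hit_eq_iUnion]
      exact subset_iUnion _ _
    have hstep : reachBefore U E (n + 1) ≤ᵐ[P x] shiftPath ⁻¹' reachBefore U E n := by
      filter_upwards [hmc.ae_start x] with ω h0 hω
      exact shiftPath_mem_reachBefore (h0 ▸ hHU.notMem_of_mem_left hx) hω
    have hterm (y : X) : p x y * P y (reachBefore U E n) ≤ p x y * q := by
      rcases (hpart ▸ mem_univ y : y ∈ H ∪ U ∪ E) with (hyH | hyU) | hyE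
      · gcongr
        exact ih y hyH
      · simp [hjump x hx hx' y hyU]
      · simp [hmc.measure_reachBefore_eq_zero_of_mem hyE]
    calc P x (reachBefore U E (n + 1))
        ≤ P x (shiftPath ⁻¹' reachBefore U E n) := measure_mono_ae hstep
      _ = ∑ y, p x y * P y (reachBefore U E n) :=
        hmc.measure_preimage_shiftPath x (measurableSet_reachBefore .of_discrete .of_discrete n)
      _ ≤ ∑ y, p x y * q := Finset.sum_le_sum fun y _ => hterm y
      _ = q := by rw [← Finset.sum_mul, hmc.sum_kernel_eq_one, one_mul]

end IsMarkovChain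

theorem stmt10_general {X : Type*} [Fintype X] [DecidableEq X] [MeasurableSpace X]
    (P : X → Measure (ℕ → X)) (pker : X → X → ℝ≥0∞)
    (H U E U' : Set X)
    (hpart : (univ : Set X) = H ∪ U ∪ E)
    (hHU : Disjoint H U)
    (hmc : IsMarkovChain P pker)
    (hproxy : ∀ x ∈ H, P x {ω | hit U' ω < hit U ω} = 1)
    (p : ℝ≥0∞)
    (hUsafe : ∀ x' ∈ U', P x' {ω | hit U ω < hit E ω} ≤ p) :
    ∀ x ∈ H, P x {ω | hit U ω < hit E ω} ≤ p := by
  have := hmc.separatesPoints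
  intro x hx
  rw [setOf_hit_lt_hit_eq_iUnion, (monotone_reachBefore U E).measure_iUnion]
  refine iSup_le fun n => hmc.measure_reachBefore_le hpart hHU ?_ hUsafe n x hx
  exact fun x hx hx' y hy => hmc.kernel_eq_zero_of_hit_lt_hit hx' hy (hproxy x hx)

/-- if every proxy state `x' ∈ U'` is `p`-safe (`S_π(x') ≤ p`), then
every state `x ∈ H` is `p`-safe, i.e. `p`-safety of the proxy set implies `p`-safety
of the whole MDP (chain induced by the stationary policy). -/
theorem stmt10 {X : Type*} [Fintype X] [DecidableEq X] [MeasurableSpace X]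
    (P : X → Measure (ℕ → X)) (pker : X → X → ℝ≥0∞)
    (H U E U' : Set X)
    (hpart : (univ : Set X) = H ∪ U ∪ E)
    (hHU : Disjoint H U) (hHE : Disjoint H E) (hUE : Disjoint U E)
    (hU' : U' ⊆ H)
    (hmc : IsMarkovChain P pker)
    (hproxy : ∀ x ∈ H, P x {ω | hit U' ω < hit U ω} = 1)
    (p : ℝ≥0∞) (hp : p ≤ 1)
    (hUsafe : ∀ x' ∈ U', P x' {ω | hit U ω < hit E ω} ≤ p) :
    ∀ x ∈ H, P x {ω | hit U ω < hit E ω} ≤ p :=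
  stmt10_general P pker H U E U' hpart hHU hmc hproxy p hUsafe
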